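/- Let g, h : PowerSeries ℚ with the constant coefficient of g equal to 0. Define p n = n! • Σ_{j=0}^{n} ((PowerSeries.coeff ℚ n (g^j))/j!) • X^j and s n = n! • Σ_{j=0}^{n} ((PowerSeries.coeff ℚ n (h * g^j))/j!) • X^j in ℚ[X] (so that Σ_n s_n(x) y^n/n! = h(y) exp(x g(y))). Then for every n and all x, z : ℚ, (s n).eval (x + z) = Σ_{k=0}^{n} (n.choose k : ℚ) * (p k).eval z * (s (n-k)).eval x. -/

import Mathlib

open Polynomial Finset

lemma tri_sum {M : Type*} [AddCommMonoid M] (N : ℕ) (F : ℕ → ℕ → M) :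
    ∑ j ∈ range N, ∑ i ∈ range (j+1), F i (j-i)
      = ∑ a ∈ range N, ∑ b ∈ range (N-a), F a b := by
  induction N with
  | zero => simp
  | succ N ih =>
    rw [Finset.sum_range_succ, ih, Finset.sum_range_succ (fun a => ∑ b ∈ range (N+1-a), F a b)]
    have h1 : ∀ a ∈ range N, ∑ b ∈ range (N+1-a), F a b
        = (∑ b ∈ range (N-a), F a b) + F a (N-a) := by
      intro a ha
      rw [Nat.succ_sub (le_of_lt (mem_range.mp ha)), Finset.sum_range_succ]
    rw [Finset.sum_congr rfl h1, Finset.sum_add_distrib,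
      Finset.sum_range_succ (fun i => F i (N-i))]
    simp [add_assoc]

theorem sheffer_shift_decomposition (g h : PowerSeries ℚ)
    (hg : PowerSeries.constantCoeff g = 0)
    (p s : ℕ → ℚ[X])
    (hp : ∀ n : ℕ, p n = n.factorial •
      ∑ j ∈ Finset.range (n + 1),
        ((PowerSeries.coeff n (g ^ j)) / (j.factorial : ℚ)) • X ^ j)
    (hs : ∀ n : ℕ, s n = n.factorial •
      ∑ j ∈ Finset.range (n + 1),
        ((PowerSeries.coeff n (h * g ^ j)) / (j.factorial : ℚ)) • X ^ j) :
    ∀ (n : ℕ) (x z : ℚ), (s n).eval (x + z) =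
      ∑ k ∈ Finset.range (n + 1),
        (n.choose k : ℚ) * (p k).eval z * (s (n - k)).eval x := by
  have hXg : (PowerSeries.X : PowerSeries ℚ) ∣ g := PowerSeries.X_dvd_iff.mpr hg
  have hvan : ∀ (f : PowerSeries ℚ) (j m : ℕ), m < j →
      PowerSeries.coeff m (f * g ^ j) = 0 := by
    intro f j m hm
    have hd : (PowerSeries.X : PowerSeries ℚ) ^ j ∣ f * g ^ j :=
      Dvd.dvd.mul_left (pow_dvd_pow_of_dvd hXg j) f
    exact PowerSeries.X_pow_dvd_iff.mp hd m hm
  have hvan' : ∀ (j m : ℕ), m < j → PowerSeries.coeff m (g ^ j) = 0 := by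
    intro j m hm
    have := hvan 1 j m hm
    simpa using this
  have fne : ∀ m : ℕ, (m.factorial : ℚ) ≠ 0 := fun m =>
    Nat.cast_ne_zero.mpr (Nat.factorial_ne_zero m)
  have es : ∀ (m : ℕ) (y : ℚ), (s m).eval y =
      (m.factorial : ℚ) * ∑ j ∈ range (m+1),
        (PowerSeries.coeff m (h * g ^ j) / (j.factorial : ℚ)) * y ^ j := by
    intro m y
    rw [hs m]
    simp only [eval_finset_sum, Finset.mul_sum, nsmul_eq_mul, eval_mul, eval_natCast,
      eval_smul, eval_pow, eval_X, smul_eq_mul]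
  have ep : ∀ (m : ℕ) (y : ℚ), (p m).eval y =
      (m.factorial : ℚ) * ∑ j ∈ range (m+1),
        (PowerSeries.coeff m (g ^ j) / (j.factorial : ℚ)) * y ^ j := by
    intro m y
    rw [hp m]
    simp only [eval_finset_sum, Finset.mul_sum, nsmul_eq_mul, eval_mul, eval_natCast,
      eval_smul, eval_pow, eval_X, smul_eq_mul]
  intro n x z
  set F : ℕ → ℕ → ℚ := fun a b =>
    (n.factorial : ℚ) / (a.factorial * b.factorial) *
      PowerSeries.coeff n (h * g ^ (a+b)) * x ^ a * z ^ b with hF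
  have hFzero : ∀ a b : ℕ, n < a + b → F a b = 0 := by
    intro a b hab
    simp [hF, hvan h (a+b) n hab]
  -- LHS
  have hLHS : (s n).eval (x + z)
      = ∑ j ∈ range (n+1), ∑ i ∈ range (j+1), F i (j-i) := by
    rw [es n (x+z), Finset.mul_sum]
    refine Finset.sum_congr rfl ?_
    intro j hj
    rw [add_pow, Finset.mul_sum, Finset.mul_sum]
    refine Finset.sum_congr rfl ?_
    intro i hi
    have hij : i ≤ j := Nat.lt_succ_iff.mp (mem_range.mp hi)
    have hsum : i + (j - i) = j := Nat.add_sub_cancel' hij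
    simp only [hF, hsum]
    rw [Nat.cast_choose ℚ hij]
    field_simp
  -- RHS
  have expand : ∀ (c1 c2 : ℚ) (u v : ℕ → ℚ),
      (c1 * ∑ b ∈ range (n+1), u b) * (c2 * ∑ a ∈ range (n+1), v a)
        = ∑ b ∈ range (n+1), ∑ a ∈ range (n+1), c1 * c2 * (u b * v a) := by
    intro c1 c2 u v
    rw [mul_mul_mul_comm, Finset.sum_mul_sum, Finset.mul_sum]
    refine Finset.sum_congr rfl fun b _ => ?_
    rw [Finset.mul_sum]
  have step1 : ∀ k ∈ range (n+1),
      (n.choose k : ℚ) * (p k).eval z * (s (n - k)).eval x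
      = ∑ b ∈ range (n+1), ∑ a ∈ range (n+1),
          (n.factorial : ℚ) / ((a.factorial : ℚ) * b.factorial) *
            (PowerSeries.coeff k (g ^ b) *
             PowerSeries.coeff (n-k) (h * g ^ a)) * x ^ a * z ^ b := by
    intro k hk
    have hkn : k ≤ n := Nat.lt_succ_iff.mp (mem_range.mp hk)
    rw [ep k z, es (n-k) x]
    have e1 : ∑ j ∈ range (k+1),
        (PowerSeries.coeff k (g ^ j) / (j.factorial : ℚ)) * z ^ j
        = ∑ j ∈ range (n+1),
        (PowerSeries.coeff k (g ^ j) / (j.factorial : ℚ)) * z ^ j := by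
      refine Finset.sum_subset (by intro t ht; simp at ht ⊢; omega) ?_
      intro b _ hb
      have : k < b := by simp at hb; omega
      rw [hvan' b k this]; simp
    have e2 : ∑ j ∈ range (n-k+1),
        (PowerSeries.coeff (n-k) (h * g ^ j) / (j.factorial : ℚ)) * x ^ j
        = ∑ j ∈ range (n+1),
        (PowerSeries.coeff (n-k) (h * g ^ j) / (j.factorial : ℚ)) * x ^ j := by
      refine Finset.sum_subset (by intro t ht; simp at ht ⊢; omega) ?_
      intro a _ ha
      have : n - k < a := by simp at ha; omega
      rw [hvan h a (n-k) this]; simp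
    rw [e1, e2, ← mul_assoc (n.choose k : ℚ) (k.factorial : ℚ), expand]
    refine Finset.sum_congr rfl fun b _ => Finset.sum_congr rfl fun a _ => ?_
    have hfac : ((n.choose k : ℚ) * (k.factorial : ℚ)) * ((n-k).factorial : ℚ)
        = (n.factorial : ℚ) := by
      exact_mod_cast Nat.choose_mul_factorial_mul_factorial hkn
    rw [hfac]
    field_simp
  have hRHS : (∑ k ∈ Finset.range (n + 1),
        (n.choose k : ℚ) * (p k).eval z * (s (n - k)).eval x)
      = ∑ a ∈ range (n+1), ∑ b ∈ range (n+1), F a b := by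
    rw [Finset.sum_congr rfl step1]
    have swp : ∀ k ∈ range (n+1),
        (∑ b ∈ range (n+1), ∑ a ∈ range (n+1),
          (n.factorial : ℚ) / ((a.factorial : ℚ) * b.factorial) *
            (PowerSeries.coeff k (g ^ b) *
             PowerSeries.coeff (n-k) (h * g ^ a)) * x ^ a * z ^ b)
        = ∑ a ∈ range (n+1), ∑ b ∈ range (n+1),
          (n.factorial : ℚ) / ((a.factorial : ℚ) * b.factorial) *
            (PowerSeries.coeff k (g ^ b) *
             PowerSeries.coeff (n-k) (h * g ^ a)) * x ^ a * z ^ b :=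
      fun k _ => Finset.sum_comm
    rw [Finset.sum_congr rfl swp, Finset.sum_comm]
    refine Finset.sum_congr rfl fun a _ => ?_
    rw [Finset.sum_comm]
    refine Finset.sum_congr rfl fun b _ => ?_
    have hcm : PowerSeries.coeff n (h * g ^ (a+b))
        = ∑ k ∈ range (n+1),
            PowerSeries.coeff k (g ^ b) * PowerSeries.coeff (n-k) (h * g ^ a) := by
      have hmm : h * g ^ (a+b) = g ^ b * (h * g ^ a) := by
        rw [pow_add]; ring
      rw [hmm, PowerSeries.coeff_mul, Finset.Nat.sum_antidiagonal_eq_sum_range_succ_mk]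
    simp only [hF]
    rw [hcm, Finset.mul_sum, Finset.sum_mul, Finset.sum_mul]
  rw [hLHS, hRHS, tri_sum (n+1) F]
  refine Finset.sum_congr rfl fun a ha => ?_
  have han : a ≤ n := Nat.lt_succ_iff.mp (mem_range.mp ha)
  refine Finset.sum_subset (by intro t ht; simp at ht ⊢; omega) ?_
  intro b _ hb
  have : n < a + b := by simp at hb; omega
  exact hFzero a b this
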